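/- If (X,𝓔) is a finitary indiscrete coarse space with (X,𝓔) = X_G, then there exists a free ultrafilter p on X whose orbit Gp is not discrete in X*. Equivalently, X itself is not scattered: X contains a piece-wise shifted FP-set. -/

import Mathlib

open Set

/-- A coarse structure on a set `X`. -/
structure CoarseStructure (X : Type*) where
  sets : Set (Set (X × X))
  diagonal_mem : ∀ E ∈ sets, ∀ x : X, (x, x) ∈ E
  comp_mem : ∀ E ∈ sets, ∀ E' ∈ sets,
    {q : X × X | ∃ z : X, (q.1, z) ∈ E ∧ (z, q.2) ∈ E'} ∈ sets
  inv_mem : ∀ E ∈ sets, {q : X × X | (q.2, q.1) ∈ E} ∈ sets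
  subset_mem : ∀ E ∈ sets, ∀ E', E' ⊆ E → (∀ x : X, (x, x) ∈ E') → E' ∈ sets
  covers : ⋃₀ sets = Set.univ

/-- The ball `E[A]`. -/
def ball {X : Type*} (E : Set (X × X)) (A : Set X) : Set X := {y | ∃ a ∈ A, (a, y) ∈ E}

/-- A bounded subset of a coarse space. -/
def CoarseStructure.Bounded {X : Type*} (C : CoarseStructure X) (B : Set X) : Prop :=
  ∃ E ∈ C.sets, ∃ x : X, B ⊆ ball E {x}

/-- A finitary coarse space: uniformly finite balls. -/
def CoarseStructure.Finitary {X : Type*} (C : CoarseStructure X) : Prop :=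
  ∀ E ∈ C.sets, ∃ n : ℕ, ∀ x : X, (ball E {x}).Finite ∧ (ball E {x}).ncard < n

/-- The set `X^♯` of ultrafilters all of whose members are unbounded. -/
def CoarseStructure.Sharp {X : Type*} (C : CoarseStructure X) : Set (Ultrafilter X) :=
  {p | ∀ P ∈ p, ¬ C.Bounded P}

/-- The parallelity relation on ultrafilters. -/
def CoarseStructure.Parallel {X : Type*} (C : CoarseStructure X) (p q : Ultrafilter X) : Prop :=
  ∃ E ∈ C.sets, ∀ P ∈ p, ball E P ∈ q

/-- The entourage determined by a set of permutations. -/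
def entourage {X : Type*} (F : Set (Equiv.Perm X)) : Set (X × X) :=
  {q | ∃ g ∈ F, q.2 = g q.1}

/-- The finitary coarse structure `X_G` determined by a group `G` of permutations of `X`:
its entourages are the diagonal-containing subsets of `{(x,gx) : x ∈ X, g ∈ F}`
for finite `F ⊆ G` with `id ∈ F`. -/
def XGsets {X : Type*} (G : Subgroup (Equiv.Perm X)) : Set (Set (X × X)) :=
  {E | (∀ x : X, (x, x) ∈ E) ∧ ∃ F : Finset (Equiv.Perm X),
    (1 : Equiv.Perm X) ∈ F ∧ ↑F ⊆ (G : Set (Equiv.Perm X)) ∧ E ⊆ entourage ↑F}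

/-- A free ultrafilter. -/
def IsFree {X : Type*} (p : Ultrafilter X) : Prop := (p : Filter X) ≤ Filter.cofinite

/-- `X*`, the space of free ultrafilters with the Stone topology. -/
def FreeUF (X : Type*) : Type _ := {p : Ultrafilter X // IsFree p}

instance (X : Type*) : TopologicalSpace (FreeUF X) :=
  instTopologicalSpaceSubtype

/-- The orbit `Gp` of an ultrafilter under the induced action `gp = {gP : P ∈ p}`. -/
def ufOrbit {X : Type*} (G : Subgroup (Equiv.Perm X)) (p : Ultrafilter X) :
    Set (Ultrafilter X) :=
  {q | ∃ g ∈ G, q = Ultrafilter.map (⇑g) p}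

/-- The `p`-companion `Δ_p(A) = A* ∩ Gp`. -/
def compan {X : Type*} (G : Subgroup (Equiv.Perm X)) (p : Ultrafilter X) (A : Set X) :
    Set (Ultrafilter X) :=
  {q | A ∈ q ∧ q ∈ ufOrbit G p}

/-- Large subsets of `X_G`. -/
def IsLarge {X : Type*} (G : Subgroup (Equiv.Perm X)) (A : Set X) : Prop :=
  ∃ E ∈ XGsets G, ball E A = Set.univ

/-- Thick subsets of `X_G`. -/
def IsThick {X : Type*} (G : Subgroup (Equiv.Perm X)) (A : Set X) : Prop :=
  ∀ E ∈ XGsets G, ∃ a ∈ A, ball E {a} ⊆ A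

/-- Thin (discrete) subsets of `X_G`. -/
def IsThin {X : Type*} (G : Subgroup (Equiv.Perm X)) (A : Set X) : Prop :=
  ∀ E ∈ XGsets G, ∃ B : Set X, B.Finite ∧ ∀ a ∈ A \ B, ball E {a} ∩ A = {a}

/-- Sparse subsets of `X_G`. -/
def IsSparse {X : Type*} (G : Subgroup (Equiv.Perm X)) (A : Set X) : Prop :=
  ∀ p : Ultrafilter X, IsFree p → (compan G p A).Finite

/-- Scattered subsets of `X_G`. -/
def IsScattered {X : Type*} (G : Subgroup (Equiv.Perm X)) (A : Set X) : Prop :=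
  ∀ Y ⊆ A, Y.Infinite →
    ∃ p : Ultrafilter X, IsFree p ∧ Y ∈ p ∧ (compan G p Y).Finite

/-- Close subsets of a coarse space. -/
def CoarseStructure.Close {X : Type*} (C : CoarseStructure X) (A B : Set X) : Prop :=
  ∃ E ∈ C.sets, A ⊆ ball E B ∧ B ⊆ ball E A

/-- Close subsets of `X_G`. -/
def CloseG {X : Type*} (G : Subgroup (Equiv.Perm X)) (A B : Set X) : Prop :=
  ∃ E ∈ XGsets G, A ⊆ ball E B ∧ B ⊆ ball E A

/-- Linked subsets of `X_G`. -/
def LinkedG {X : Type*} (G : Subgroup (Equiv.Perm X)) (A B : Set X) : Prop :=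
  (A.Finite ∧ B.Finite) ∨
    ∃ A' ⊆ A, ∃ B' ⊆ B, A'.Infinite ∧ B'.Infinite ∧ CloseG G A' B'


open Set

/-- The `n`-th block `{g_0^{ε_0} ⋯ g_n^{ε_n} x_n : ε_i ∈ {0,1}}`. -/
def pwBlock {X : Type*} (g : ℕ → Equiv.Perm X) (x : ℕ → X) (n : ℕ) : Set X :=
  {y | ∃ ε : Fin (n + 1) → Bool,
    y = ((List.ofFn fun i : Fin (n + 1) =>
      (g i) ^ (if ε i then 1 else 0)).prod : Equiv.Perm X) (x n)}

/-- A piece-wise shifted FP-set determined by the group `G`. -/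
def IsPWShiftedFP {X : Type*} (G : Subgroup (Equiv.Perm X)) (Y : Set X) : Prop :=
  ∃ g : ℕ → Equiv.Perm X, ∃ x : ℕ → X,
    (∀ n, g n ∈ G) ∧
    (∀ m n, m ≠ n → Disjoint (pwBlock g x m) (pwBlock g x n)) ∧
    (∀ n, (pwBlock g x n).ncard = 2 ^ (n + 1)) ∧
    Y = ⋃ n, pwBlock g x n

/-- The group of all self-homeomorphisms of a topological space, as a subgroup
of the permutation group. -/
def homeoSubgroup (X : Type*) [TopologicalSpace X] : Subgroup (Equiv.Perm X) where
  carrier := {g | Continuous g ∧ Continuous g.symm}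
  one_mem' := ⟨continuous_id, continuous_id⟩
  mul_mem' := by
    rintro a b ⟨ha1, ha2⟩ ⟨hb1, hb2⟩
    refine ⟨?_, ?_⟩
    · simpa [Equiv.Perm.mul_def, Equiv.coe_trans] using ha1.comp hb1
    · simpa [Equiv.Perm.mul_def, Equiv.symm_trans_apply] using (hb2.comp ha2 : _)
  inv_mem' := by
    rintro a ⟨ha1, ha2⟩
    exact ⟨ha2, by rw [Equiv.Perm.inv_def, Equiv.symm_symm]; exact ha1⟩


/-- The parallelity relation on ultrafilters over the coarse space `X_G`. -/
def ParallelG {X : Type*} (G : Subgroup (Equiv.Perm X)) (p q : Ultrafilter X) : Prop :=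
  ∃ E ∈ XGsets G, ∀ P ∈ p, ball E P ∈ q

/-- Linked subsets of a coarse space. -/
def CoarseStructure.Linked {X : Type*} (C : CoarseStructure X) (A B : Set X) : Prop :=
  (C.Bounded A ∧ C.Bounded B) ∨
    ∃ A' ⊆ A, ∃ B' ⊆ B, ¬ C.Bounded A' ∧ ¬ C.Bounded B' ∧ C.Close A' B'

/-- The orbit `Gp` viewed as a subset of the space `X*` of free ultrafilters. -/
def freeOrbit {X : Type*} (G : Subgroup (Equiv.Perm X)) (p : Ultrafilter X) :
    Set (FreeUF X) :=
  {q | q.1 ∈ ufOrbit G p}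

/-!
Indiscreteness says that every infinite `A ⊆ X` contains infinitely many points `a` with
`h a ∈ A \ {a}` for a single `h ∈ G`. If the `2ⁿ` words in `g₀, …, gₙ₋₁` are injective at
infinitely many points, pass to infinitely many such points with pairwise disjoint blocks of
words and let `gₙ` move infinitely many of them inside this set: the `2ⁿ⁺¹` words in
`g₀, …, gₙ` are then injective at the moved points. Choosing base points `xₙ` greedily with
disjoint blocks gives the piece-wise shifted FP-set.

For the orbit, make `G × X` a semigroup by `(u, a) * (v, b) = (u * v, u • b)` and take an
idempotent ultrafilter `U` containing every tail FP-set of the sequence `(gₙ, xₙ)`; its image `p`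
on `X` is free. For `s ∈ p`, idempotence yields an FP-product `(u, a)` with `s ∈ u p`, and
`u p ≠ p` since `u` maps the `p`-large set of second coordinates of later FP-products off itself.
-/

open Function

theorem exists_seq_of_forall_exists_update {β : Type*} (Q : ℕ → (ℕ → β) → Prop)
    (hQ : ∀ n f f', (∀ i < n, f i = f' i) → Q n f → Q n f')
    (h₀ : ∃ f, Q 0 f) (hstep : ∀ n f, Q n f → ∃ b, Q (n + 1) (update f n b)) :
    ∃ f, ∀ n, Q n f := by
  obtain ⟨f₀, hf₀⟩ := h₀
  have : Nonempty β := ⟨(hstep 0 f₀ hf₀).choose⟩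
  choose! next hnext using hstep
  let F : ℕ → ℕ → β := fun n => Nat.rec f₀ (fun n f => update f n (next n f)) n
  have hF : ∀ n, Q n (F n) := fun n => Nat.rec hf₀ (fun n ih => hnext n _ ih) n
  have hstable : ∀ i n, i < n → F n i = F (i + 1) i := by
    intro i n hin
    induction n, hin using Nat.le_induction with
    | base => rfl
    | succ n hn ih => exact (update_of_ne (by omega) _ _).trans ih
  exact ⟨fun i => F (i + 1) i, fun n => hQ n _ _ (fun i hi => hstable i n hi) (hF n)⟩

theorem exists_seq_pairwise_disjoint {α : Type*} (P : ℕ → α → Prop) (B : ℕ → α → Set α)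
    (hB : ∀ n a, (B n a).Finite) (h : ∀ n U, U.Finite → ∃ a, P n a ∧ Disjoint (B n a) U) :
    ∃ x : ℕ → α, (∀ n, P n (x n)) ∧ Pairwise (Disjoint on fun n => B n (x n)) := by
  have : Nonempty α := ⟨(h 0 ∅ finite_empty).choose⟩
  choose! pick hpick using h
  -- `U n` is the union of the first `n` chosen sets
  let U : ℕ → Set α := fun n => Nat.rec ∅ (fun n U => U ∪ B n (pick n U)) n
  have hU : ∀ n, (U n).Finite := fun n =>
    Nat.rec finite_empty (fun n ih => ih.union (hB _ _)) n
  have hsub : ∀ m n, m < n → B m (pick m (U m)) ⊆ U n := by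
    intro m n hmn
    induction n, hmn using Nat.le_induction with
    | base => exact subset_union_right
    | succ n hn ih => exact ih.trans subset_union_left
  refine ⟨fun n => pick n (U n), fun n => (hpick n _ (hU n)).1, fun m n hmn => ?_⟩
  rcases hmn.lt_or_gt with h | h
  · exact ((hpick n _ (hU n)).2.mono_right (hsub m n h)).symm
  · exact (hpick m _ (hU m)).2.mono_right (hsub n m h)

section idempotent

attribute [local instance] Ultrafilter.semigroup

theorem Hindman.exists_idempotent_ultrafilter_forall_FP_drop {M : Type*} [Semigroup M]
    (a : Stream' M) : ∃ U : Ultrafilter M, U * U = U ∧ ∀ n, FP (a.drop n) ∈ U := by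
  let S : ℕ → Set (Ultrafilter M) := fun n => {U | FP (a.drop n) ∈ U}
  have hanti : ∀ n, S (n + 1) ⊆ S n := fun n U hU => Filter.mem_of_superset hU <| by
    simpa only [Stream'.drop_drop] using FP_drop_subset_FP (a.drop n) 1
  have hne : (⋂ n, S n).Nonempty :=
    IsCompact.nonempty_iInter_of_sequence_nonempty_isCompact_isClosed S hanti
      (fun n => ⟨pure _, Filter.mem_pure.mpr (FP.head _)⟩)
      (ultrafilter_isClosed_basic _).isCompact (fun n => ultrafilter_isClosed_basic _)
  -- products of elements of a tail `FP`-set stay in a (shorter) tail `FP`-set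
  have hmul : ∀ U ∈ ⋂ n, S n, ∀ V ∈ ⋂ n, S n, U * V ∈ ⋂ n, S n := by
    simp only [mem_iInter]
    intro U hU V hV n
    change ∀ᶠ m in (U * V : Ultrafilter M), m ∈ FP (a.drop n)
    rw [Ultrafilter.eventually_mul]
    filter_upwards [hU n] with m hm
    obtain ⟨k, hk⟩ := FP.mul hm
    filter_upwards [hV (n + k)] with m' hm'
    exact hk _ (by rwa [Stream'.drop_drop])
  obtain ⟨U, hU, hidem⟩ := exists_idempotent_in_compact_subsemigroup
    Ultrafilter.continuous_mul_left _ hne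
    (isClosed_iInter fun n => ultrafilter_isClosed_basic _).isCompact hmul
  exact ⟨U, hidem, mem_iInter.mp hU⟩

end idempotent

theorem Set.Finite.finite_setOf_not_disjoint {α ι : Type*} {F : Set α} (hF : F.Finite)
    {B : ι → Set α} (hB : Pairwise (Disjoint on B)) :
    {i | ¬Disjoint (B i) F}.Finite := by
  refine (hF.biUnion fun y _ => Set.Subsingleton.finite (s := {i | y ∈ B i}) ?_).subset ?_
  · intro i hi j hj
    by_contra hij
    exact (hB hij).ne_of_mem hi hj rfl
  · intro i hi
    obtain ⟨y, hyB, hyF⟩ := not_disjoint_iff.mp hi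
    exact mem_biUnion hyF hyB

theorem IsFree.map {X Y : Type*} {p : Ultrafilter X} (hp : IsFree p) {f : X → Y}
    (hf : Injective f) : IsFree (p.map f) := by
  rw [IsFree, Ultrafilter.coe_map]
  exact (Filter.map_mono hp).trans hf.tendsto_cofinite

theorem not_discreteTopology_freeOrbit {X : Type*} {G : Subgroup (Equiv.Perm X)}
    {p : Ultrafilter X} (hp : IsFree p)
    (hacc : ∀ s ∈ p, ∃ u ∈ G, s ∈ p.map u ∧ p.map u ≠ p) :
    ¬DiscreteTopology (freeOrbit G p) := by
  intro hdisc
  let ι : freeOrbit G p → Ultrafilter X := fun q => q.1.1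
  have hι : Topology.IsInducing ι :=
    Topology.IsInducing.subtypeVal.comp Topology.IsInducing.subtypeVal
  let pt : freeOrbit G p := ⟨⟨p, hp⟩, 1, G.one_mem, by simp⟩
  obtain ⟨W, hW, hWpt⟩ := hι.isOpen_iff.mp (isOpen_discrete {pt})
  obtain ⟨_, ⟨s, rfl⟩, hps, hsW⟩ := ultrafilterBasis_is_basis.exists_subset_of_mem_open
    (show p ∈ W from (hWpt.symm ▸ rfl : pt ∈ ι ⁻¹' W)) hW
  obtain ⟨u, huG, hsu, hne⟩ := hacc s hps
  have hq : (⟨⟨p.map u, hp.map u.injective⟩, u, huG, rfl⟩ : freeOrbit G p) ∈ ι ⁻¹' W := hsW hsu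
  rw [hWpt, mem_singleton_iff] at hq
  exact hne (congrArg (fun q : freeOrbit G p => q.1.1) hq)

section wordProd

variable {M : Type*} [Monoid M]

/-- The ordered product `g i₁ * ⋯ * g iᵣ` over the elements `i₁ < ⋯ < iᵣ` of `s` below `n`. -/
def wordProd (g : ℕ → M) (s : Finset ℕ) (n : ℕ) : M :=
  (List.ofFn fun i : Fin n => if (i : ℕ) ∈ s then g i else 1).prod

theorem wordProd_succ (g : ℕ → M) (s : Finset ℕ) (n : ℕ) :
    wordProd g s (n + 1) = wordProd g s n * if n ∈ s then g n else 1 := by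
  simp only [wordProd, List.ofFn_succ', List.prod_concat, Fin.val_castSucc, Fin.val_last]

theorem wordProd_congr {g g' : ℕ → M} {s t : Finset ℕ} {n : ℕ}
    (h : ∀ i < n, (if i ∈ s then g i else 1) = if i ∈ t then g' i else 1) :
    wordProd g s n = wordProd g' t n := by
  induction n with
  | zero => rfl
  | succ n ih =>
    rw [wordProd_succ, wordProd_succ, ih fun i hi => h i (by omega), h n (by omega)]

theorem wordProd_inter_range (g : ℕ → M) (s : Finset ℕ) (n : ℕ) :
    wordProd g (s ∩ Finset.range n) n = wordProd g s n :=
  wordProd_congr fun i hi => by simp [hi]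

theorem wordProd_eq_one {g : ℕ → M} {s : Finset ℕ} {n : ℕ} (hs : ∀ i ∈ s, n ≤ i) :
    wordProd g s n = 1 := by
  induction n with
  | zero => rfl
  | succ n ih =>
    rw [wordProd_succ, ih fun i hi => by have := hs i hi; omega,
      if_neg fun hn => by have := hs n hn; omega, mul_one]

theorem wordProd_union {g : ℕ → M} {s t : Finset ℕ} {m n : ℕ} (hs : ∀ i ∈ s, i < m)
    (ht : ∀ i ∈ t, m ≤ i) (hmn : m ≤ n) :
    wordProd g (s ∪ t) n = wordProd g s m * wordProd g t n := by
  induction n, hmn using Nat.le_induction with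
  | base =>
    rw [wordProd_eq_one ht, mul_one]
    exact wordProd_congr fun i hi => by
      simp only [Finset.mem_union, or_iff_left fun h => (ht i h).not_gt hi]
  | succ n hmn ih =>
    have hns : n ∉ s := fun h => (hs n h).not_ge hmn
    simp only [wordProd_succ, ih, mul_assoc, Finset.mem_union, hns, false_or]

theorem wordProd_insert {g : ℕ → M} {s : Finset ℕ} {k n : ℕ} (hs : ∀ i ∈ s, k < i)
    (hk : k < n) : wordProd g (insert k s) n = g k * wordProd g s n := by
  rw [Finset.insert_eq, wordProd_union (m := k + 1) (by simp) hs hk, wordProd_succ,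
    wordProd_eq_one (by simp), one_mul, if_pos (Finset.mem_singleton_self k)]

theorem wordProd_update_succ (g : ℕ → M) (h : M) (s : Finset ℕ) (n : ℕ) :
    wordProd (update g n h) s (n + 1) = wordProd g s n * if n ∈ s then h else 1 := by
  rw [wordProd_succ, update_self]
  congr 1
  exact wordProd_congr fun i hi => by rw [update_of_ne hi.ne]

theorem wordProd_mem {S : Type*} [SetLike S M] [SubmonoidClass S M] {H : S} {g : ℕ → M}
    (hg : ∀ i, g i ∈ H) (s : Finset ℕ) (n : ℕ) : wordProd g s n ∈ H := by
  induction n with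
  | zero => exact one_mem H
  | succ n ih =>
    rw [wordProd_succ]
    exact mul_mem ih (by split_ifs <;> simp [hg, one_mem])

end wordProd

section actionPair

variable {M α : Type*} [Monoid M] [MulAction M α]

abbrev actionPairSemigroup (M α : Type*) [Monoid M] [MulAction M α] : Semigroup (M × α) where
  mul m m' := (m.1 * m'.1, m.1 • m'.2)
  mul_assoc _ _ _ := Prod.ext (mul_assoc _ _ _) (mul_smul _ _ _)

attribute [local instance] actionPairSemigroup

theorem actionPair_mul_def (m m' : M × α) : m * m' = (m.1 * m'.1, m.1 • m'.2) := rfl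

theorem exists_eq_wordProd_of_mem_FP_drop {g : ℕ → M} {x : ℕ → α} {k : ℕ} {m : M × α}
    (hm : m ∈ Hindman.FP (Stream'.drop k fun n => (g n, x n))) :
    ∃ n t, k ≤ n ∧ (∀ i ∈ t, k ≤ i ∧ i < n) ∧
      m = (wordProd g (insert n t) (n + 1), wordProd g t (n + 1) • x n) := by
  generalize hb : Stream'.drop k (fun n => (g n, x n)) = b at hm
  have hhead : ∀ {k b}, Stream'.drop k (fun n => (g n, x n)) = b → b.head = (g k, x k) :=
    fun hb => hb ▸ Stream'.head_drop _ _
  have htail : ∀ {k b}, Stream'.drop k (fun n => (g n, x n)) = b →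
      Stream'.drop (k + 1) (fun n => (g n, x n)) = b.tail := fun hb => hb ▸ Stream'.tail_drop'.symm
  induction hm generalizing k with
  | head' b =>
    refine ⟨k, ∅, le_rfl, by simp, ?_⟩
    rw [hhead hb, insert_empty_eq, wordProd_succ, wordProd_eq_one (by simp),
      wordProd_eq_one (s := ∅) (by simp), one_smul]
    simp
  | tail' b m _ ih =>
    obtain ⟨n, t, hkn, ht, rfl⟩ := ih (htail hb)
    exact ⟨n, t, by omega, fun i hi => ⟨by have := (ht i hi).1; omega, (ht i hi).2⟩, rfl⟩
  | cons' b m _ ih =>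
    obtain ⟨n, t, hkn, ht, rfl⟩ := ih (htail hb)
    refine ⟨n, insert k t, by omega, fun i hi => ?_, ?_⟩
    · rcases Finset.mem_insert.mp hi with rfl | hi
      · exact ⟨le_rfl, by omega⟩
      · exact ⟨by have := (ht i hi).1; omega, (ht i hi).2⟩
    · have ht' : ∀ i ∈ t, k < i := fun i hi => (ht i hi).1
      have hnt : ∀ i ∈ insert n t, k < i := by simpa [show k < n by omega] using ht'
      rw [hhead hb, actionPair_mul_def, Finset.insert_comm n k t, wordProd_insert hnt (by omega),
        wordProd_insert ht' (by omega), mul_smul]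

end actionPair

section block

variable {Γ α : Type*} [Group Γ] [MulAction Γ α]

def block (g : ℕ → Γ) (n : ℕ) (a : α) : Set α :=
  range fun s : Finset ℕ => wordProd g s n • a

def injPoints (g : ℕ → Γ) (n : ℕ) : Set α :=
  {a | ∀ s t, wordProd g s n • a = wordProd g t n • a → ∀ i < n, (i ∈ s ↔ i ∈ t)}

theorem mem_block_self (g : ℕ → Γ) (n : ℕ) (a : α) : a ∈ block g n a :=
  ⟨∅, by simp [wordProd_eq_one]⟩

theorem block_eq_image (g : ℕ → Γ) (n : ℕ) (a : α) :
    block g n a = (fun s => wordProd g s n • a) '' ↑(Finset.range n).powerset := by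
  refine subset_antisymm ?_ (image_subset_range _ _)
  rintro _ ⟨s, rfl⟩
  exact ⟨s ∩ Finset.range n, by simp, by simp only [wordProd_inter_range]⟩

theorem finite_block (g : ℕ → Γ) (n : ℕ) (a : α) : (block g n a).Finite := by
  rw [block_eq_image]
  exact (Finset.finite_toSet _).image _

theorem ncard_block {g : ℕ → Γ} {n : ℕ} {a : α} (ha : a ∈ injPoints g n) :
    (block g n a).ncard = 2 ^ n := by
  rw [block_eq_image, InjOn.ncard_image, ncard_coe_finset, Finset.card_powerset,
    Finset.card_range]
  intro s hs t ht hst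
  ext i
  by_cases hi : i < n
  · exact ha s t hst i hi
  · simp only [Finset.coe_powerset, mem_preimage, mem_powerset_iff, Finset.coe_subset] at hs ht
    exact iff_of_false (fun h => hi (Finset.mem_range.mp (hs h)))
      (fun h => hi (Finset.mem_range.mp (ht h)))

theorem injPoints_congr {g g' : ℕ → Γ} {n : ℕ} (h : ∀ i < n, g i = g' i) :
    injPoints g n = (injPoints g' n : Set α) := by
  have hw : ∀ s, wordProd g s n = wordProd g' s n := fun s =>
    wordProd_congr fun i hi => by rw [h i hi]
  simp only [injPoints, hw]

theorem finite_setOf_not_disjoint_block (g : ℕ → Γ) (n : ℕ) {U : Set α} (hU : U.Finite) :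
    {a | ¬Disjoint (block g n a) U}.Finite := by
  refine ((Finset.finite_toSet (Finset.range n).powerset).biUnion
    fun s _ => hU.preimage (MulAction.injective (wordProd g s n)).injOn).subset ?_
  intro a ha
  obtain ⟨_, ⟨s, rfl⟩, hsU⟩ := not_disjoint_iff.mp ha
  refine mem_biUnion (x := s ∩ Finset.range n) (by simp) ?_
  rwa [mem_preimage, wordProd_inter_range]

theorem exists_mem_disjoint_block (g : ℕ → Γ) (n : ℕ) {A U : Set α} (hA : A.Infinite)
    (hU : U.Finite) : ∃ a ∈ A, Disjoint (block g n a) U :=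
  let ⟨a, haA, ha⟩ := (hA.sdiff (finite_setOf_not_disjoint_block g n hU)).nonempty
  ⟨a, haA, not_not.mp ha⟩

theorem exists_infinite_pairwiseDisjoint_block (g : ℕ → Γ) (n : ℕ) {A : Set α}
    (hA : A.Infinite) : ∃ B ⊆ A, B.Infinite ∧ B.PairwiseDisjoint (block g n) := by
  obtain ⟨b, hbA, hdisj⟩ := exists_seq_pairwise_disjoint (fun _ a => a ∈ A)
    (fun _ => block g n) (fun _ => finite_block g n) fun _ _ hU =>
      exists_mem_disjoint_block g n hA hU
  have hinj : Injective b := fun k l hkl => by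
    by_contra hne
    exact (hdisj hne).ne_of_mem (mem_block_self g n (b k)) (hkl ▸ mem_block_self g n (b l)) rfl
  refine ⟨range b, range_subset_iff.mpr hbA, infinite_range_of_injective hinj, ?_⟩
  rintro _ ⟨k, rfl⟩ _ ⟨l, rfl⟩ hne
  exact hdisj fun h => hne (congrArg b h)

theorem mem_injPoints_update {g : ℕ → Γ} {h : Γ} {n : ℕ} {a : α} (ha : a ∈ injPoints g n)
    (hha : h • a ∈ injPoints g n) (hdisj : Disjoint (block g n a) (block g n (h • a))) :
    a ∈ injPoints (update g n h) (n + 1) := by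
  intro s t hst i hi
  simp only [wordProd_update_succ, mul_smul] at hst
  by_cases hs : n ∈ s <;> by_cases ht : n ∈ t <;>
    simp only [hs, ht, if_true, if_false, one_smul] at hst
  · rcases (Nat.lt_succ_iff_lt_or_eq.mp hi) with hi | rfl
    · exact hha s t hst i hi
    · exact iff_of_true hs ht
  · exact absurd hst (hdisj.ne_of_mem ⟨t, rfl⟩ ⟨s, rfl⟩).symm
  · exact absurd hst (hdisj.ne_of_mem ⟨s, rfl⟩ ⟨t, rfl⟩)
  · rcases (Nat.lt_succ_iff_lt_or_eq.mp hi) with hi | rfl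
    · exact ha s t hst i hi
    · exact iff_of_false hs ht

structure IsShiftedFPSeq (G : Subgroup Γ) (g : ℕ → Γ) (x : ℕ → α) : Prop where
  mem : ∀ n, g n ∈ G
  mem_injPoints : ∀ n, x n ∈ injPoints g (n + 1)
  pairwise_disjoint : Pairwise (Disjoint on fun n => block g (n + 1) (x n))

end block

section indiscrete

variable {X : Type*} {G : Subgroup (Equiv.Perm X)}

theorem exists_infinite_setOf_apply_ne_mem {A : Set X} (hA : ¬IsThin G A) :
    ∃ h ∈ G, {a ∈ A | h a ≠ a ∧ h a ∈ A}.Infinite := by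
  simp only [IsThin, not_forall, not_exists, not_and] at hA
  obtain ⟨E, ⟨hdiag, F, -, hFG, hEF⟩, hE⟩ := hA
  by_contra! hfin
  have hmoved : (⋃ h ∈ F, {a ∈ A | h a ≠ a ∧ h a ∈ A}).Finite :=
    F.finite_toSet.biUnion fun h hh => hfin h (hFG hh)
  obtain ⟨a, ⟨haA, ha⟩, hne⟩ := hE _ hmoved
  refine hne (subset_antisymm ?_ ?_)
  · rintro y ⟨⟨b, rfl, hy⟩, hyA⟩
    obtain ⟨h, hhF, rfl : y = h b⟩ := hEF hy
    by_contra hya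
    exact ha (mem_biUnion hhF ⟨haA, hya, hyA⟩)
  · exact singleton_subset_iff.mpr ⟨⟨a, rfl, hdiag a⟩, haA⟩

theorem exists_injPoints_update_infinite (hind : ∀ A : Set X, A.Infinite → ¬IsThin G A)
    {g : ℕ → Equiv.Perm X} {n : ℕ} (hg : (injPoints g n : Set X).Infinite) :
    ∃ h ∈ G, (injPoints (update g n h) (n + 1) : Set X).Infinite := by
  obtain ⟨B, hBA, hB, hdisj⟩ := exists_infinite_pairwiseDisjoint_block g n hg
  obtain ⟨h, hhG, hmoved⟩ := exists_infinite_setOf_apply_ne_mem (hind B hB)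
  refine ⟨h, hhG, hmoved.mono ?_⟩
  rintro a ⟨haB, hne, hhaB⟩
  exact mem_injPoints_update (hBA haB) (hBA hhaB) (hdisj haB hhaB hne.symm)

theorem exists_isShiftedFPSeq [Infinite X] (hind : ∀ A : Set X, A.Infinite → ¬IsThin G A) :
    ∃ (g : ℕ → Equiv.Perm X) (x : ℕ → X), IsShiftedFPSeq G g x := by
  obtain ⟨g, hg⟩ := exists_seq_of_forall_exists_update
    (fun n g => (∀ i < n, g i ∈ G) ∧ (injPoints g n : Set X).Infinite)
    (fun n f f' h hf => ⟨fun i hi => h i hi ▸ hf.1 i hi, injPoints_congr (α := X) h ▸ hf.2⟩)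
    ⟨1, fun i hi => absurd hi i.not_lt_zero, by simpa [injPoints] using infinite_univ⟩
    fun n f hf => by
      obtain ⟨h, hhG, hh⟩ := exists_injPoints_update_infinite hind hf.2
      refine ⟨h, fun i hi => ?_, hh⟩
      rcases Nat.lt_succ_iff_lt_or_eq.mp hi with hi | rfl
      · rw [update_of_ne hi.ne]
        exact hf.1 i hi
      · rwa [update_self]
  obtain ⟨x, hx, hdisj⟩ := exists_seq_pairwise_disjoint (fun n a => a ∈ injPoints g (n + 1))
    (fun n => block g (n + 1)) (fun n => finite_block g _)
    fun n _ hU => exists_mem_disjoint_block g _ (hg (n + 1)).2 hU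
  exact ⟨g, x, fun n => (hg (n + 1)).1 n n.lt_succ_self, hx, hdisj⟩

end indiscrete

section pwBlock

variable {X : Type*}

theorem pwBlock_eq_block (g : ℕ → Equiv.Perm X) (x : ℕ → X) (n : ℕ) :
    pwBlock g x n = block g (n + 1) (x n) := by
  ext y
  constructor
  · rintro ⟨ε, rfl⟩
    refine ⟨(Finset.univ.filter fun i => ε i).image Fin.val, ?_⟩
    simp only [wordProd, Equiv.Perm.smul_def]
    congr 3
    funext i
    simp only [Finset.mem_image, Finset.mem_filter, Finset.mem_univ, true_and, Fin.val_inj,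
      exists_eq_right]
    split_ifs <;> simp
  · rintro ⟨s, rfl⟩
    refine ⟨fun i => decide ((i : ℕ) ∈ s), ?_⟩
    simp only [wordProd, Equiv.Perm.smul_def]
    congr 3
    funext i
    split_ifs <;> simp_all

theorem IsShiftedFPSeq.isPWShiftedFP {G : Subgroup (Equiv.Perm X)} {g : ℕ → Equiv.Perm X}
    {x : ℕ → X} (h : IsShiftedFPSeq G g x) : IsPWShiftedFP G (⋃ n, pwBlock g x n) := by
  refine ⟨g, x, h.mem, fun m n hmn => ?_, fun n => ?_, rfl⟩
  · simpa only [pwBlock_eq_block] using h.pairwise_disjoint hmn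
  · rw [pwBlock_eq_block, ncard_block (h.mem_injPoints n)]

end pwBlock

section ultrafilter

attribute [local instance] actionPairSemigroup Ultrafilter.semigroup

variable {Γ α : Type*} [Group Γ] [MulAction Γ α] {G : Subgroup Γ} {g : ℕ → Γ} {x : ℕ → α}

theorem IsShiftedFPSeq.smul_notMem_snd_FP_drop (h : IsShiftedFPSeq G g x) {n : ℕ}
    {t : Finset ℕ} (ht : ∀ i ∈ t, i < n) {y : α}
    (hy : y ∈ Prod.snd '' Hindman.FP (Stream'.drop (n + 1) fun k => (g k, x k))) :
    wordProd g (insert n t) (n + 1) • y ∉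
      Prod.snd '' Hindman.FP (Stream'.drop (n + 1) fun k => (g k, x k)) := by
  rintro ⟨m, hm, hmy⟩
  obtain ⟨_, hm', rfl⟩ := hy
  obtain ⟨k, t', hk, ht', rfl⟩ := exists_eq_wordProd_of_mem_FP_drop hm'
  obtain ⟨l, t'', -, ht'', rfl⟩ := exists_eq_wordProd_of_mem_FP_drop hm
  have hs : ∀ i ∈ insert n t, i < n + 1 := by
    simpa [Nat.lt_succ_iff] using fun i hi => (ht i hi).le
  rw [← mul_smul, ← wordProd_union hs (fun i hi => (ht' i hi).1) (by omega)] at hmy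
  obtain rfl : l = k := by
    by_contra hlk
    exact h.pairwise_disjoint hlk |>.ne_of_mem ⟨t'', rfl⟩ ⟨_, hmy.symm⟩ rfl
  have := (h.mem_injPoints l _ _ hmy n (by omega)).mpr (by simp)
  exact absurd (ht'' n this).1 (by omega)

theorem IsShiftedFPSeq.exists_ultrafilter (h : IsShiftedFPSeq G g x) :
    ∃ p : Ultrafilter α, IsFree p ∧
      ∀ s ∈ p, ∃ u ∈ G, s ∈ p.map (u • ·) ∧ p.map (u • ·) ≠ p := by
  obtain ⟨U, hidem, hU⟩ :=
    Hindman.exists_idempotent_ultrafilter_forall_FP_drop fun n => (g n, x n)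
  refine ⟨U.map Prod.snd, fun s hs => ?_, fun s hs => ?_⟩
  · obtain ⟨K, hK⟩ :=
      ((Filter.mem_cofinite.mp hs).finite_setOf_not_disjoint h.pairwise_disjoint).bddAbove
    refine Ultrafilter.mem_map.mpr (Filter.mem_of_superset (hU (K + 1)) fun m hm => ?_)
    obtain ⟨n, t, hn, -, rfl⟩ := exists_eq_wordProd_of_mem_FP_drop hm
    by_contra hms
    have := hK (not_disjoint_iff.mpr ⟨_, ⟨t, rfl⟩, hms⟩)
    omega
  have hs' : ∀ᶠ m in (U : Filter (Γ × α)), ∀ᶠ m' in (U : Filter (Γ × α)), (m * m').2 ∈ s := by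
    rw [← Ultrafilter.eventually_mul U U fun m => m.2 ∈ s, hidem]
    exact Ultrafilter.mem_map.mp hs
  obtain ⟨m, hms, hm⟩ := (hs'.and (hU 0)).exists
  obtain ⟨n, t, -, ht, rfl⟩ := exists_eq_wordProd_of_mem_FP_drop hm
  refine ⟨_, wordProd_mem h.mem _ _, Ultrafilter.mem_map.mpr (Ultrafilter.mem_map.mpr hms),
    fun heq => ?_⟩
  have hT : Prod.snd '' Hindman.FP (Stream'.drop (n + 1) fun k => (g k, x k)) ∈ U.map Prod.snd :=
    Filter.image_mem_map (hU (n + 1))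
  obtain ⟨y, hy, hwy⟩ := Ultrafilter.nonempty_of_mem
    (Filter.inter_mem hT (Ultrafilter.mem_map.mp (heq ▸ hT : _ ∈ Ultrafilter.map _ _)))
  exact h.smul_notMem_snd_FP_drop (fun i hi => (ht i hi).2) hy hwy

end ultrafilter

theorem indiscrete_nondiscrete_orbit_general {X : Type*} [Infinite X]
    (G : Subgroup (Equiv.Perm X))
    (hind : ∀ A : Set X, A.Infinite → ¬ IsThin G A) :
    (∃ p : Ultrafilter X, IsFree p ∧ ¬ DiscreteTopology ↥(freeOrbit G p)) ∧
    (∃ Y : Set X, IsPWShiftedFP G Y) := by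
  obtain ⟨g, x, hgx⟩ := exists_isShiftedFPSeq hind
  obtain ⟨p, hp, hacc⟩ := hgx.exists_ultrafilter
  exact ⟨⟨p, hp, not_discreteTopology_freeOrbit hp hacc⟩, ⟨_, hgx.isPWShiftedFP⟩⟩

/-- If `(X,𝓔)` is a finitary indiscrete coarse space with
`(X,𝓔) = X_G`, then some free ultrafilter has non-discrete orbit in `X*`;
equivalently `X` is not scattered: it contains a piece-wise shifted FP-set. -/
theorem indiscrete_nondiscrete_orbit {X : Type*} [Infinite X] (C : CoarseStructure X)
    (hfin : C.Finitary) (G : Subgroup (Equiv.Perm X)) (hG : C.sets = XGsets G)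
    (hind : ∀ A : Set X, A.Infinite → ¬ IsThin G A) :
    (∃ p : Ultrafilter X, IsFree p ∧ ¬ DiscreteTopology ↥(freeOrbit G p)) ∧
    (∃ Y : Set X, IsPWShiftedFP G Y) :=
  indiscrete_nondiscrete_orbit_general G hind
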